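/- Let k = F_2[t_1,t_2,t_3]/(t_1^2,t_2^2,t_3^2) and M = k^3/⟨t_1 e_1 + t_2 e_2 + t_3 e_3⟩. Then the map Λ^2 M → M ⊗ M, a ∧ b ↦ a ⊗ b − b ⊗ a, is not injective: the element t_1 e_1 ∧ t_2 e_2 is a nonzero element of its kernel. -/

import Mathlib

/-!
STATEMENT 7: Let `k = F₂[t₁,t₂,t₃]/(t₁²,t₂²,t₃²)` and `M = k³/⟨t₁e₁ + t₂e₂ + t₃e₃⟩`.
Then the map `Λ²M → M ⊗ M`, `a ∧ b ↦ a ⊗ b − b ⊗ a`, is not injective: the element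
`t₁e₁ ∧ t₂e₂` is a nonzero element of its kernel.
-/

open scoped TensorProduct
open MvPolynomial

set_option maxHeartbeats 1000000
set_option synthInstance.maxHeartbeats 400000

noncomputable section

/-- `k = F₂[t₁,t₂,t₃]/(t₁²,t₂²,t₃²)`. -/
abbrev KK : Type :=
  MvPolynomial (Fin 3) (ZMod 2) ⧸
    Ideal.span (Set.range fun i : Fin 3 => (X i : MvPolynomial (Fin 3) (ZMod 2)) ^ 2)

/-- The class of the variable `tᵢ` in `k`. -/
def tK (i : Fin 3) : KK := Ideal.Quotient.mk _ (X i)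

/-- `M = k³/⟨t₁e₁ + t₂e₂ + t₃e₃⟩`. -/
abbrev MM : Type := (Fin 3 → KK) ⧸ Submodule.span KK {(fun i => tK i : Fin 3 → KK)}

/-- The element `tᵢ eᵢ ∈ M`. -/
def xElt (i : Fin 3) : MM := Submodule.Quotient.mk (Pi.single i (tK i))

/-- The wedge `v 0 ∧ ⋯ ∧ v (n-1)` in the `n`-th exterior power. -/
def wedgeMk (R : Type*) [CommRing R] (M : Type*) [AddCommGroup M] [Module R M]
    (n : ℕ) (v : Fin n → M) : ⋀[R]^n M :=
  ⟨ExteriorAlgebra.ιMulti R n v, by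
    rw [← ExteriorAlgebra.ιMulti_span_fixedDegree]
    exact Submodule.subset_span ⟨v, rfl⟩⟩

/-- The element `t₁e₁ ∧ t₂e₂ ∈ Λ² M`. -/
def kosElt : ⋀[KK]^2 MM := wedgeMk KK MM 2 ![xElt 0, xElt 1]

/-!
Write `xᵢ = tᵢeᵢ` and `r = (t₁, t₂, t₃)`. Since `xᵢ = tᵢ • eᵢ` and `tᵢ • xᵢ = 0`, each
`xᵢ ⊗ xᵢ` vanishes; as `x₁ + x₂ = -x₃`, expanding `(x₁ + x₂) ⊗ (x₁ + x₂) = 0` gives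
`x₁ ⊗ x₂ + x₂ ⊗ x₁ = 0`, which in characteristic 2 says `x₁ ∧ x₂` lies in the kernel.
It is nonzero because the alternating form `(x, y) ↦ det (r, x, y) = r ⬝ (x × y)` on `k³`
vanishes as soon as one argument is a multiple of `r`, so it descends to `Λ²M`, and its value
on `(x₁, x₂)` is `t₁t₂t₃ ≠ 0`.
-/

section Alternating

variable {R M N : Type*} [CommRing R] [AddCommGroup M] [Module R M] [AddCommGroup N] [Module R N]

lemma wedgeMk_ne_zero_of_alternatingMap {n : ℕ} (φ : M [⋀^Fin n]→ₗ[R] N) {v : Fin n → M}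
    (hv : φ v ≠ 0) : wedgeMk R M n v ≠ 0 := by
  intro h
  apply hv
  have hι : exteriorPower.ιMulti R n v = 0 := h
  rw [← exteriorPower.alternatingMapLinearEquiv_apply_ιMulti, hι, map_zero]

def LinearMap.toAlternatingMapFinTwo (B : M →ₗ[R] M →ₗ[R] N) (hB : ∀ x, B x x = 0) :
    M [⋀^Fin 2]→ₗ[R] N where
  toFun v := B (v 0) (v 1)
  map_update_add' v i x y := by fin_cases i <;> simp
  map_update_smul' v i c x := by fin_cases i <;> simp
  map_eq_zero_of_eq' v i j hv hij := by
    fin_cases i <;> fin_cases j <;> simp_all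

end Alternating

section TripleProduct

open Matrix

variable {R : Type*} [CommRing R]

def tripleProductForm (r : Fin 3 → R) : (Fin 3 → R) →ₗ[R] (Fin 3 → R) →ₗ[R] R :=
  crossProduct.compr₂ (dotProductBilin R R r)

@[simp]
lemma tripleProductForm_apply (r x y : Fin 3 → R) : tripleProductForm r x y = r ⬝ᵥ x ⨯₃ y := rfl

lemma span_le_ker_tripleProductForm (r : Fin 3 → R) :
    R ∙ r ≤ LinearMap.ker (tripleProductForm r) := by
  rw [Submodule.span_singleton_le_iff_mem, LinearMap.mem_ker]
  exact LinearMap.ext (dot_self_cross r)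

lemma span_le_ker_flip_tripleProductForm (r : Fin 3 → R) :
    R ∙ r ≤ LinearMap.ker (tripleProductForm r).flip := by
  rw [Submodule.span_singleton_le_iff_mem, LinearMap.mem_ker]
  exact LinearMap.ext fun x => dot_cross_self x r

def quotientTripleProductForm (r : Fin 3 → R) :
    ((Fin 3 → R) ⧸ R ∙ r) [⋀^Fin 2]→ₗ[R] R :=
  ((tripleProductForm r).liftQ₂ _ _ (span_le_ker_tripleProductForm r)
    (span_le_ker_flip_tripleProductForm r)).toAlternatingMapFinTwo (by
      refine (Submodule.Quotient.mk_surjective _).forall.2 fun x => ?_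
      simp [cross_self])

@[simp]
lemma quotientTripleProductForm_mk (r x y : Fin 3 → R) :
    quotientTripleProductForm r ![Submodule.Quotient.mk x, Submodule.Quotient.mk y] =
      r ⬝ᵥ x ⨯₃ y := rfl

end TripleProduct

section Tensor

open TensorProduct

variable {R M : Type*} [CommRing R] [AddCommGroup M] [Module R M]

lemma TensorProduct.tmul_self_eq_zero_of_eq_smul {r : R} {e x : M} (hx : x = r • e)
    (hr : r • x = 0) : x ⊗ₜ[R] x = 0 :=
  calc x ⊗ₜ[R] x = (r • e) ⊗ₜ[R] x := by rw [← hx]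
    _ = e ⊗ₜ[R] (r • x) := smul_tmul r e x
    _ = 0 := by rw [hr, tmul_zero]

lemma TensorProduct.tmul_add_tmul_comm_eq_zero {a b : M} (ha : a ⊗ₜ[R] a = 0)
    (hb : b ⊗ₜ[R] b = 0) (hab : (a + b) ⊗ₜ[R] (a + b) = 0) : a ⊗ₜ[R] b + b ⊗ₜ[R] a = 0 := by
  rwa [add_tmul, tmul_add, tmul_add, ha, hb, zero_add, add_zero] at hab

lemma sub_eq_add_of_two_eq_zero (h2 : (2 : R) = 0) (x y : M) : x - y = x + y := by
  have hy : y + y = 0 := by rw [← two_smul R y, h2, zero_smul]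
  rw [sub_eq_add_neg, neg_eq_of_add_eq_zero_right hy]

end Tensor

lemma two_eq_zero_of_zmod_two_algebra (A : Type*) [Ring A] [Algebra (ZMod 2) A] : (2 : A) = 0 := by
  rw [← map_ofNat (algebraMap (ZMod 2) A) 2, show (2 : ZMod 2) = 0 from rfl, map_zero]

lemma tK_mul_self (i : Fin 3) : tK i * tK i = 0 := by
  rw [tK, ← map_mul, ← pow_two, Ideal.Quotient.eq_zero_iff_mem]
  exact Ideal.subset_span ⟨i, rfl⟩

lemma tK_mul_tK_mul_tK_ne_zero : tK 0 * tK 1 * tK 2 ≠ 0 := by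
  have hspan : Set.range (fun i : Fin 3 => (X i : MvPolynomial (Fin 3) (ZMod 2)) ^ 2) =
      (fun s => monomial s 1) '' Set.range (fun i : Fin 3 => Finsupp.single i 2) := by
    rw [← Set.range_comp]
    simp only [Function.comp_def, X_pow_eq_monomial]
  have hprod : (X 0 * X 1 * X 2 : MvPolynomial (Fin 3) (ZMod 2)) =
      monomial (Finsupp.single 0 1 + Finsupp.single 1 1 + Finsupp.single 2 1) 1 := by
    simp [X, monomial_mul]
  rw [tK, tK, tK, ← map_mul, ← map_mul, Ne, Ideal.Quotient.eq_zero_iff_mem, hspan,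
    mem_ideal_span_monomial_image, hprod]
  simp only [support_monomial, one_ne_zero, if_false, Finset.mem_singleton, forall_eq,
    Set.exists_range_iff, not_exists]
  intro i h
  have := h i
  fin_cases i <;> simp at this

lemma xElt_eq_smul (i : Fin 3) :
    xElt i = tK i • (Submodule.Quotient.mk (Pi.single i 1) : MM) := by
  rw [xElt, ← Submodule.Quotient.mk_smul, ← Pi.single_smul', smul_eq_mul, mul_one]

lemma tK_smul_xElt (i : Fin 3) : tK i • xElt i = 0 := by
  rw [xElt, ← Submodule.Quotient.mk_smul, ← Pi.single_smul', smul_eq_mul, tK_mul_self,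
    Pi.single_zero, Submodule.Quotient.mk_zero]

lemma xElt_tmul_self (i : Fin 3) : xElt i ⊗ₜ[KK] xElt i = 0 :=
  TensorProduct.tmul_self_eq_zero_of_eq_smul (xElt_eq_smul i) (tK_smul_xElt i)

lemma xElt_zero_add_xElt_one : xElt 0 + xElt 1 = -xElt 2 := by
  rw [eq_neg_iff_add_eq_zero, xElt, xElt, xElt, ← Submodule.Quotient.mk_add,
    ← Submodule.Quotient.mk_add, Submodule.Quotient.mk_eq_zero]
  convert Submodule.mem_span_singleton_self (fun i => tK i) using 1
  ext j
  fin_cases j <;> simp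

lemma xElt_zero_tmul_xElt_one_add_comm : xElt 0 ⊗ₜ[KK] xElt 1 + xElt 1 ⊗ₜ[KK] xElt 0 = 0 :=
  TensorProduct.tmul_add_tmul_comm_eq_zero (xElt_tmul_self 0) (xElt_tmul_self 1) (by
    rw [xElt_zero_add_xElt_one, TensorProduct.neg_tmul, TensorProduct.tmul_neg, neg_neg,
      xElt_tmul_self])

open Matrix in
lemma quotientTripleProductForm_xElt :
    quotientTripleProductForm (fun i => tK i) ![xElt 0, xElt 1] = tK 0 * tK 1 * tK 2 := by
  rw [xElt, xElt, quotientTripleProductForm_mk, cross_apply, vec3_dotProduct]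
  simp [mul_comm, mul_left_comm]

theorem statement7
    -- the map `Λ²M → M ⊗ M`, `a ∧ b ↦ a ⊗ b − b ⊗ a`
    (f : (⋀[KK]^2 MM : Submodule KK _) →ₗ[KK] (MM ⊗[KK] MM))
    (hf : ∀ a b : MM, f (wedgeMk KK MM 2 ![a, b]) = a ⊗ₜ[KK] b - b ⊗ₜ[KK] a) :
    kosElt ≠ 0 ∧ f kosElt = 0 ∧ ¬ Function.Injective f := by
  have hne : kosElt ≠ 0 :=
    wedgeMk_ne_zero_of_alternatingMap (quotientTripleProductForm fun i => tK i)
      (by rw [quotientTripleProductForm_xElt]; exact tK_mul_tK_mul_tK_ne_zero)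
  have hker : f kosElt = 0 := by
    rw [kosElt, hf, sub_eq_add_of_two_eq_zero (two_eq_zero_of_zmod_two_algebra KK),
      xElt_zero_tmul_xElt_one_add_comm]
  exact ⟨hne, hker, fun hinj => hne (hinj (hker.trans (map_zero f).symm))⟩

end
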